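/- arXiv:math/0605773 — 3 statements merged into one kernel-verified Lean document; each statement's English description precedes it below -/
import Mathlib

section
/- Let A be a K-algebra, G a finite group acting on A, P a finitely generated projective A ∗ G-module, N an A ∗ G-module, and W a KG-module. Then there is a K-vector space isomorphism Hom_A(P, N) ⊗_K W ≅ Hom_{A∗G}(P ⊗_K KG, N ⊗_K W), given by φ ⊗ w ↦ (p ⊗ g ↦ (g·φ)(p) ⊗ gw). -/
/-!
The isomorphism is the composite
`Hom_A(P, N) ⊗_K W ≅ Hom_A(P, N ⊗_K W) ≅ Hom_{A∗G}(P ⊗_K KG, N ⊗_K W)`.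
The first map `f ⊗ w ↦ (p ↦ f p ⊗ w)` is bijective because a basis of `W` identifies
`N ⊗_K W` with a direct sum of copies of `N`, and `Hom_A(P, -)` commutes with direct sums since
`P` is finitely generated over `A` (`A ∗ G` is generated over `A` by `G`). The second is
Frobenius reciprocity: `P ⊗ 1` generates `P ⊗_K KG` over `A ∗ G`, so an `A ∗ G`-map is determined
by its restriction to `P ⊗ 1`, which is `A`-linear, and conversely an `A`-linear `f` extends by
`p ⊗ g ↦ g f(g⁻¹ p)`; the skew commutation rule is what makes this extension `A ∗ G`-linear.
-/

universe u

/-- `B` is a skew group algebra `A ∗ G` for the action `φ` of `G` on the `K`-algebra `A`: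
`B` contains `A` and invertible elements indexed by `G` satisfying the skew commutation
rule `g · a = (g a) · g`, and `B` is free as an `A`-module with basis `G`. -/
structure IsSkewGroupAlgebra (K : Type u) [Field K] (A : Type u) [Ring A] [Algebra K A]
    (G : Type u) [Group G] [Fintype G] (φ : G →* (A ≃ₐ[K] A))
    (B : Type u) [Ring B] [Algebra K B] where
  ιA : A →ₐ[K] B
  ιG : G →* B
  comm : ∀ (g : G) (a : A), ιG g * ιA a = ιA (φ g a) * ιG g
  free : ∀ b : B, ∃! c : G → A, b = ∑ g : G, ιA (c g) * ιG g


open TensorProduct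

namespace TensorProduct

theorem induction_on_tmul_of {K P G : Type*} [CommSemiring K] [Monoid G]
    [AddCommMonoid P] [Module K P] {motive : P ⊗[K] MonoidAlgebra K G → Prop}
    (x : P ⊗[K] MonoidAlgebra K G) (zero : motive 0)
    (add : ∀ x y, motive x → motive y → motive (x + y))
    (tmul_of : ∀ p g, motive (p ⊗ₜ MonoidAlgebra.of K G g)) : motive x := by
  induction x using TensorProduct.induction_on with
  | zero => exact zero
  | add x y hx hy => exact add x y hx hy
  | tmul p y =>
    induction y using MonoidAlgebra.induction_on generalizing p with
    | of g => exact tmul_of p g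
    | add y z hy hz => rw [tmul_add]; exact add _ _ (hy p) (hz p)
    | smul k y hy => rw [← smul_tmul]; exact hy (k • p)

variable {K A P N W : Type*} [CommRing K] [Ring A] [Algebra K A]
  [AddCommGroup P] [Module A P] [Module.Finite A P]
  [AddCommGroup N] [Module A N] [Module K N] [IsScalarTower K A N]
  [AddCommGroup W] [Module K W] [Module.Free K W]

noncomputable def linearMapTensorEquiv : (P →ₗ[A] N) ⊗[K] W ≃ₗ[K] (P →ₗ[A] N ⊗[K] W) := by
  classical
  let b := Module.Free.chooseBasis K W
  let eN : N ⊗[K] W ≃ₗ[A] (Module.Free.ChooseBasisIndex K W →₀ N) :=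
    (AlgebraTensorModule.congr (LinearEquiv.refl A N) b.repr).trans (finsuppScalarRight K A N _)
  exact LinearEquiv.lTensor _ b.repr ≪≫ₗ finsuppScalarRight K K (P →ₗ[A] N) _ ≪≫ₗ
    LinearEquiv.ofBijective (LinearMap.finsuppLinearMap K)
      (LinearMap.finsuppLinearMap_bijective_of_moduleFinite ..) ≪≫ₗ
    LinearEquiv.ofLinearMap (LinearMap.compRight K eN.symm.toLinearMap)
      (LinearMap.compRight K eN.toLinearMap) (by ext; simp) (by ext; simp)

theorem linearMapTensorEquiv_tmul_apply (f : P →ₗ[A] N) (w : W) (p : P) :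
    linearMapTensorEquiv (f ⊗ₜ[K] w) p = f p ⊗ₜ[K] w := by
  simp only [linearMapTensorEquiv, LinearEquiv.trans_apply, LinearEquiv.lTensor_tmul,
    LinearEquiv.ofBijective_apply, LinearEquiv.coe_ofLinearMap, LinearMap.compRight_apply,
    LinearMap.coe_comp, LinearEquiv.coe_coe, Function.comp_apply]
  rw [LinearEquiv.symm_apply_eq]
  ext i
  simp

end TensorProduct

namespace IsSkewGroupAlgebra

variable {K : Type u} [Field K] {A : Type u} [Ring A] [Algebra K A] {G : Type u} [Group G]
  [Fintype G] {φ : G →* (A ≃ₐ[K] A)} {B : Type u} [Ring B] [Algebra K B]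
  (H : IsSkewGroupAlgebra K A G φ B)

theorem exists_eq_sum (b : B) : ∃ c : G → A, b = ∑ g, H.ιA (c g) * H.ιG g :=
  (H.free b).exists

theorem finite_of_finite {P : Type*} [AddCommGroup P] [Module B P] [Module A P]
    (hPA : ∀ (a : A) (p : P), H.ιA a • p = a • p) [Module.Finite B P] : Module.Finite A P := by
  classical
  obtain ⟨s, hs⟩ := Module.Finite.fg_top (R := B) (M := P)
  refine ⟨⟨Finset.image₂ (fun g q => H.ιG g • q) Finset.univ s, eq_top_iff.2 fun p _ => ?_⟩⟩
  have hp : p ∈ Submodule.span B s := hs ▸ Submodule.mem_top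
  obtain ⟨c, -, rfl⟩ := Submodule.mem_span_finset.1 hp
  refine Submodule.sum_mem _ fun q hq => ?_
  obtain ⟨d, hd⟩ := H.exists_eq_sum (c q)
  rw [hd, Finset.sum_smul]
  refine Submodule.sum_mem _ fun g _ => ?_
  rw [mul_smul, hPA]
  exact Submodule.smul_mem _ _ <| Submodule.subset_span <|
    Finset.mem_image₂_of_mem (Finset.mem_univ g) hq

theorem isScalarTower_of_smul_eq {P : Type*} [AddCommGroup P] [Module B P] [Module A P]
    [Module K P] (hPA : ∀ (a : A) (p : P), H.ιA a • p = a • p)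
    (hPK : ∀ (k : K) (p : P), algebraMap K B k • p = k • p) : IsScalarTower K A P :=
  .of_algebraMap_smul fun k p => by rw [← hPA, H.ιA.commutes, hPK]

section InducedModule

variable {P : Type*} [AddCommGroup P] [Module B P] [Module K P]
  [Module B (P ⊗[K] MonoidAlgebra K G)]

variable (P) in
abbrev IsInducedAction : Prop :=
  ∀ (a : A) (g : G) (p : P) (h : G),
    (H.ιA a * H.ιG g) • (p ⊗ₜ[K] MonoidAlgebra.of K G h) =
      ((H.ιA a * H.ιG g) • p) ⊗ₜ[K] MonoidAlgebra.of K G (g * h)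

theorem ιG_smul_tmul_of (hPKG : H.IsInducedAction P) (g : G) (p : P) (h : G) :
    H.ιG g • (p ⊗ₜ[K] MonoidAlgebra.of K G h) =
      (H.ιG g • p) ⊗ₜ[K] MonoidAlgebra.of K G (g * h) := by
  simpa using hPKG 1 g p h

theorem ιA_smul_tmul_of (hPKG : H.IsInducedAction P) (a : A) (p : P) (h : G) :
    H.ιA a • (p ⊗ₜ[K] MonoidAlgebra.of K G h) = (H.ιA a • p) ⊗ₜ[K] MonoidAlgebra.of K G h := by
  simpa using hPKG a 1 p h

theorem hom_ext_tmul_of_one {M : Type*} [AddCommGroup M] [Module B M]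
    (hPKG : H.IsInducedAction P) {F₁ F₂ : P ⊗[K] MonoidAlgebra K G →ₗ[B] M}
    (h : ∀ p, F₁ (p ⊗ₜ MonoidAlgebra.of K G 1) = F₂ (p ⊗ₜ MonoidAlgebra.of K G 1)) :
    F₁ = F₂ := by
  ext x
  induction x using TensorProduct.induction_on_tmul_of with
  | zero => simp only [map_zero]
  | add x y hx hy => rw [map_add, map_add, hx, hy]
  | tmul_of p g =>
    have : p ⊗ₜ[K] MonoidAlgebra.of K G g =
        H.ιG g • ((H.ιG g⁻¹ • p) ⊗ₜ MonoidAlgebra.of K G 1) := by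
      rw [H.ιG_smul_tmul_of hPKG, smul_smul, ← map_mul, mul_inv_cancel, map_one, one_smul,
        mul_one]
    rw [this, map_smul, map_smul, h]

end InducedModule

section Conjugate

variable {P : Type*} [AddCommGroup P] [Module B P] [Module A P] [Module K P]
  {M : Type*} [AddCommGroup M] [Module B M] [Module A M] [Module K M] [SMulCommClass B K M]
  [IsScalarTower K A M] (hPA : ∀ (a : A) (p : P), H.ιA a • p = a • p)
  (hPK : ∀ (k : K) (p : P), algebraMap K B k • p = k • p)

-- `hPK` is not phrased as an instance `IsScalarTower K B P`: that instance would give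
-- `P ⊗[K] MonoidAlgebra K G` a second `B`-action, `TensorProduct.leftHasSMul`.

-- The action `g · f` of `G` on `Hom_A(P, M)`.
def conjugate (f : P →ₗ[A] M) (g : G) : P →ₗ[K] M where
  toFun p := H.ιG g • f (H.ιG g⁻¹ • p)
  map_add' p q := by rw [smul_add, map_add, smul_add]
  map_smul' k p := by
    have : IsScalarTower K B P := .of_algebraMap_smul hPK
    have := H.isScalarTower_of_smul_eq hPA hPK
    rw [smul_comm, ← algebraMap_smul A k, map_smul, algebraMap_smul, RingHom.id_apply, smul_comm]

theorem conjugate_apply (f : P →ₗ[A] M) (g : G) (p : P) :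
    H.conjugate hPA hPK f g p = H.ιG g • f (H.ιG g⁻¹ • p) := rfl

theorem conjugate_mul_smul (hMA : ∀ (a : A) (m : M), H.ιA a • m = a • m) (f : P →ₗ[A] M)
    (a : A) (h g : G) (p : P) :
    H.conjugate hPA hPK f (h * g) ((H.ιA a * H.ιG h) • p) =
      (H.ιA a * H.ιG h) • H.conjugate hPA hPK f g p := by
  simp only [conjugate_apply]
  calc H.ιG (h * g) • f (H.ιG (h * g)⁻¹ • (H.ιA a * H.ιG h) • p)
      = H.ιG (h * g) • f (H.ιA (φ (h * g)⁻¹ a) • H.ιG g⁻¹ • p) := by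
        rw [smul_smul, ← mul_assoc, H.comm, mul_assoc, ← map_mul,
          show (h * g)⁻¹ * h = g⁻¹ by group, mul_smul]
    _ = (H.ιG (h * g) * H.ιA (φ (h * g)⁻¹ a)) • f (H.ιG g⁻¹ • p) := by
        rw [hPA, map_smul, ← hMA, mul_smul]
    _ = (H.ιA a * H.ιG h) • H.ιG g • f (H.ιG g⁻¹ • p) := by
        rw [H.comm, ← AlgEquiv.mul_apply, ← map_mul, mul_inv_cancel, map_one,
          AlgEquiv.one_apply, map_mul, ← mul_assoc, mul_smul]

noncomputable def inducedHom (f : P →ₗ[A] M) : P ⊗[K] MonoidAlgebra K G →ₗ[K] M :=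
  lift ((Finsupp.lsum K fun g => LinearMap.toSpanSingleton K _ (H.conjugate hPA hPK f g)) ∘ₗ
    (MonoidAlgebra.coeffLinearEquiv K).toLinearMap).flip

theorem inducedHom_tmul_of (f : P →ₗ[A] M) (p : P) (g : G) :
    H.inducedHom hPA hPK f (p ⊗ₜ MonoidAlgebra.of K G g) = H.conjugate hPA hPK f g p := by
  simp [inducedHom]

variable [Module B (P ⊗[K] MonoidAlgebra K G)]

theorem inducedHom_smul
    (hPKG : H.IsInducedAction P)
    (hMA : ∀ (a : A) (m : M), H.ιA a • m = a • m) (f : P →ₗ[A] M) (b : B)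
    (x : P ⊗[K] MonoidAlgebra K G) :
    H.inducedHom hPA hPK f (b • x) = b • H.inducedHom hPA hPK f x := by
  induction x using TensorProduct.induction_on_tmul_of with
  | zero => simp only [smul_zero, map_zero]
  | add x y hx hy => rw [smul_add, map_add, map_add, hx, hy, smul_add]
  | tmul_of p g =>
    obtain ⟨c, rfl⟩ := H.exists_eq_sum b
    rw [Finset.sum_smul, Finset.sum_smul, map_sum]
    refine Finset.sum_congr rfl fun h _ => ?_
    rw [hPKG, inducedHom_tmul_of, inducedHom_tmul_of, H.conjugate_mul_smul hPA hPK hMA]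

variable (hPKG : H.IsInducedAction P)
  (hMA : ∀ (a : A) (m : M), H.ιA a • m = a • m)

noncomputable def inducedHomEquiv :
    (P ⊗[K] MonoidAlgebra K G →ₗ[B] M) ≃ₗ[K] (P →ₗ[A] M) where
  toFun F :=
    { toFun p := F (p ⊗ₜ MonoidAlgebra.of K G 1)
      map_add' p q := by rw [add_tmul, map_add]
      map_smul' a p := by
        rw [RingHom.id_apply, ← hPA, ← hMA, ← map_smul, H.ιA_smul_tmul_of hPKG] }
  map_add' _ _ := rfl
  map_smul' _ _ := rfl
  invFun f :=
    { H.inducedHom hPA hPK f with map_smul' := H.inducedHom_smul hPA hPK hPKG hMA f }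
  left_inv F := H.hom_ext_tmul_of_one hPKG fun p => by
    change H.inducedHom hPA hPK _ (p ⊗ₜ MonoidAlgebra.of K G 1) = _
    rw [inducedHom_tmul_of, conjugate_apply]
    simp only [inv_one, map_one, one_smul, LinearMap.coe_mk, AddHom.coe_mk]
  right_inv f := LinearMap.ext fun p => by
    change H.inducedHom hPA hPK f (p ⊗ₜ MonoidAlgebra.of K G 1) = _
    rw [inducedHom_tmul_of, conjugate_apply, inv_one, map_one, one_smul, one_smul]

theorem inducedHomEquiv_symm_apply_tmul_of (f : P →ₗ[A] M) (p : P) (g : G) :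
    (H.inducedHomEquiv hPA hPK hPKG hMA).symm f (p ⊗ₜ MonoidAlgebra.of K G g) =
      H.ιG g • f (H.ιG g⁻¹ • p) :=
  H.inducedHom_tmul_of hPA hPK f p g

end Conjugate

end IsSkewGroupAlgebra

theorem stmt10_general (K : Type u) [Field K] (A : Type u) [Ring A] [Algebra K A]
    (G : Type u) [Group G] [Fintype G] (φ : G →* (A ≃ₐ[K] A))
    (B : Type u) [Ring B] [Algebra K B]
    (H : IsSkewGroupAlgebra K A G φ B)
    -- P : a finitely generated projective A ∗ G-module
    (P : Type u) [AddCommGroup P] [Module B P] [Module A P] [Module K P]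
    (hPA : ∀ (a : A) (p : P), H.ιA a • p = a • p)
    (hPK : ∀ (k : K) (p : P), algebraMap K B k • p = k • p)
    [Module.Finite B P]
    -- N : an A ∗ G-module
    (N : Type u) [AddCommGroup N] [Module B N] [Module A N] [Module K N]
    [SMulCommClass A K N]
    (hNA : ∀ (a : A) (n : N), H.ιA a • n = a • n)
    (hNK : ∀ (k : K) (n : N), algebraMap K B k • n = k • n)
    -- W : a KG-module
    (W : Type u) [AddCommGroup W] [Module K W] (ψ : G →* (W ≃ₗ[K] W))
    -- the twisted A ∗ G-module structure on P ⊗_K KG : (ag)(p ⊗ h) = a(gp) ⊗ gh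
    [Module B (P ⊗[K] MonoidAlgebra K G)]
    (hPKG : ∀ (a : A) (g : G) (p : P) (h : G),
      (H.ιA a * H.ιG g) • (p ⊗ₜ[K] MonoidAlgebra.of K G h) =
        ((H.ιA a * H.ιG g) • p) ⊗ₜ[K] MonoidAlgebra.of K G (g * h))
    -- the twisted A ∗ G-module structure on N ⊗_K W : (ag)(n ⊗ w) = a(gn) ⊗ gw
    [Module B (N ⊗[K] W)] [SMulCommClass B K (N ⊗[K] W)]
    (hNW : ∀ (a : A) (g : G) (n : N) (w : W),
      (H.ιA a * H.ιG g) • (n ⊗ₜ[K] w) = ((H.ιA a * H.ιG g) • n) ⊗ₜ[K] (ψ g w)) :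
    ∃ Θ : ((P →ₗ[A] N) ⊗[K] W) ≃ₗ[K] ((P ⊗[K] MonoidAlgebra K G) →ₗ[B] (N ⊗[K] W)),
      ∀ (f : P →ₗ[A] N) (w : W) (p : P) (g : G),
        Θ (f ⊗ₜ[K] w) (p ⊗ₜ[K] MonoidAlgebra.of K G g) =
          (H.ιG g • f (H.ιG g⁻¹ • p)) ⊗ₜ[K] (ψ g w) := by
  have := H.isScalarTower_of_smul_eq hNA hNK
  have hNWA : ∀ (a : A) (y : N ⊗[K] W), H.ιA a • y = a • y := fun a y => by
    induction y using TensorProduct.induction_on with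
    | zero => simp only [smul_zero]
    | tmul n w => simpa [hNA, smul_tmul'] using hNW a 1 n w
    | add y z hy hz => rw [smul_add, smul_add, hy, hz]
  have := H.finite_of_finite hPA
  refine ⟨linearMapTensorEquiv ≪≫ₗ (H.inducedHomEquiv hPA hPK hPKG hNWA).symm, fun f w p g => ?_⟩
  rw [LinearEquiv.trans_apply, H.inducedHomEquiv_symm_apply_tmul_of,
    linearMapTensorEquiv_tmul_apply]
  simpa using hNW 1 g (f (H.ιG g⁻¹ • p)) w

theorem stmt10 (K : Type u) [Field K] (A : Type u) [Ring A] [Algebra K A]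
    (G : Type u) [Group G] [Fintype G] (φ : G →* (A ≃ₐ[K] A))
    (B : Type u) [Ring B] [Algebra K B]
    (H : IsSkewGroupAlgebra K A G φ B)
    -- P : a finitely generated projective A ∗ G-module
    (P : Type u) [AddCommGroup P] [Module B P] [Module A P] [Module K P]
    (hPA : ∀ (a : A) (p : P), H.ιA a • p = a • p)
    (hPK : ∀ (k : K) (p : P), algebraMap K B k • p = k • p)
    [Module.Finite B P] (hproj : Module.Projective B P)
    -- N : an A ∗ G-module
    (N : Type u) [AddCommGroup N] [Module B N] [Module A N] [Module K N]
    [SMulCommClass A K N]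
    (hNA : ∀ (a : A) (n : N), H.ιA a • n = a • n)
    (hNK : ∀ (k : K) (n : N), algebraMap K B k • n = k • n)
    -- W : a KG-module
    (W : Type u) [AddCommGroup W] [Module K W] (ψ : G →* (W ≃ₗ[K] W))
    -- the twisted A ∗ G-module structure on P ⊗_K KG : (ag)(p ⊗ h) = a(gp) ⊗ gh
    [Module B (P ⊗[K] MonoidAlgebra K G)]
    (hPKG : ∀ (a : A) (g : G) (p : P) (h : G),
      (H.ιA a * H.ιG g) • (p ⊗ₜ[K] MonoidAlgebra.of K G h) =
        ((H.ιA a * H.ιG g) • p) ⊗ₜ[K] MonoidAlgebra.of K G (g * h))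
    -- the twisted A ∗ G-module structure on N ⊗_K W : (ag)(n ⊗ w) = a(gn) ⊗ gw
    [Module B (N ⊗[K] W)] [SMulCommClass B K (N ⊗[K] W)]
    (hNW : ∀ (a : A) (g : G) (n : N) (w : W),
      (H.ιA a * H.ιG g) • (n ⊗ₜ[K] w) = ((H.ιA a * H.ιG g) • n) ⊗ₜ[K] (ψ g w)) :
    ∃ Θ : ((P →ₗ[A] N) ⊗[K] W) ≃ₗ[K] ((P ⊗[K] MonoidAlgebra K G) →ₗ[B] (N ⊗[K] W)),
      ∀ (f : P →ₗ[A] N) (w : W) (p : P) (g : G),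
        Θ (f ⊗ₜ[K] w) (p ⊗ₜ[K] MonoidAlgebra.of K G g) =
          (H.ιG g • f (H.ιG g⁻¹ • p)) ⊗ₜ[K] (ψ g w) :=
  stmt10_general K A G φ B H P hPA hPK N hNA hNK W ψ hPKG hNW
end

section
/- Let G be a finite group, A a G-graded K-algebra, P a finitely generated graded projective A-module, and N a graded A-module. Then there is a K-vector space isomorphism Hom_A(P, N) ⊗_K (KG)^* ≅ Hom_{A#G^*}(P ⊗_K (KG)^*, N ⊗_K (KG)^*), given by φ ⊗ p_g ↦ (x_h ⊗ p_l ↦ (φ(x_h))_{hlg^{-1}} ⊗ p_g) for homogeneous x_h of degree h. -/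
open CategoryTheory DirectSum

universe u

open TensorProduct

structure IsSmashProduct (K : Type u) [Field K] (A : Type u) [Ring A] [Algebra K A]
    (G : Type u) [Group G] [Fintype G] [DecidableEq G]
    (𝒜 : G → Submodule K A) [DirectSum.Decomposition 𝒜]
    (B : Type u) [Ring B] [Algebra K B] where
  ι : A →ₐ[K] B
  u : G → B
  idem : ∀ g : G, u g * u g = u g
  orth : ∀ g h : G, g ≠ h → u g * u h = 0
  sum_u : ∑ g : G, u g = 1
  comm : ∀ (g h : G) (a : A),
    u g * (ι a * u h) = ι ((DirectSum.decompose 𝒜 a (g * h⁻¹) : 𝒜 (g * h⁻¹)) : A) * u h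
  free : ∀ b : B, ∃! c : G → A, b = ∑ g : G, ι (c g) * u g

set_option linter.unusedSectionVars false
namespace Stmt15Aux

variable {K : Type u} [Field K]
variable {G : Type u} [Group G] [Fintype G] [DecidableEq G]

section Proj
variable {M : Type u} [AddCommGroup M] [Module K M]

/-- projection onto the `g`-component of a grading, as a `K`-linear endomap -/
noncomputable def proj (ℳ : G → Submodule K M) [DirectSum.Decomposition ℳ] (g : G) :
    M →ₗ[K] M where
  toFun m := DirectSum.decompose ℳ m g
  map_add' m m' := by simp
  map_smul' k m := by
    show ((DirectSum.decompose ℳ (k • m)) g : M) = k • ((DirectSum.decompose ℳ m) g : M)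
    rw [DirectSum.decompose_smul]; rfl

variable (ℳ : G → Submodule K M) [DirectSum.Decomposition ℳ]

lemma proj_mem (g : G) (m : M) : proj ℳ g m ∈ ℳ g := (DirectSum.decompose ℳ m g).2

lemma proj_of_mem_same {g : G} {m : M} (hm : m ∈ ℳ g) : proj ℳ g m = m :=
  DirectSum.decompose_of_mem_same ℳ hm

lemma proj_of_mem_ne {g h : G} {m : M} (hm : m ∈ ℳ g) (hne : g ≠ h) : proj ℳ h m = 0 :=
  DirectSum.decompose_of_mem_ne ℳ hm hne

lemma sum_proj (m : M) : ∑ g : G, proj ℳ g m = m := by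
  letI : ∀ (i : G) (x : ℳ i), Decidable (x ≠ 0) := fun _ _ => Classical.dec _
  have h := DirectSum.sum_support_decompose ℳ m
  calc ∑ g : G, proj ℳ g m
      = ∑ g ∈ DFinsupp.support (DirectSum.decompose ℳ m), ((DirectSum.decompose ℳ m) g : M) := by
        refine (Finset.sum_subset (Finset.subset_univ _) ?_).symm
        intro g _ hg
        simpa [proj] using DFinsupp.notMem_support_iff.mp hg
    _ = m := h

lemma proj_proj (g h : G) (m : M) :
    proj ℳ h (proj ℳ g m) = if g = h then proj ℳ g m else 0 := by
  split
  · next he => exact he ▸ proj_of_mem_same ℳ (proj_mem ℳ g m)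
  · next he => exact proj_of_mem_ne ℳ (proj_mem ℳ g m) he

lemma sum_proj_conj (ℳ : G → Submodule K M) [DirectSum.Decomposition ℳ]
    (h g : G) (w : M) : ∑ l : G, proj ℳ (h * l * g⁻¹) w = w := by
  have := Equiv.sum_comp ((Equiv.mulLeft h).trans (Equiv.mulRight g⁻¹))
    (fun j => proj ℳ j w)
  simp only [Equiv.trans_apply, Equiv.coe_mulLeft, Equiv.coe_mulRight] at this
  rw [this, sum_proj]

end Proj


lemma single_eq_smul (l : G) (c : K) :
    (Pi.single l c : G → K) = c • (Pi.single l 1 : G → K) := by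
  rw [← Pi.single_smul, smul_eq_mul, mul_one]

lemma one_eq_sum_single : (1 : G → K) = ∑ l : G, (Pi.single l 1 : G → K) := by
  have := Finset.univ_sum_single (fun _ : G => (1 : K))
  exact this.symm

section Smul
variable {A : Type u} [Ring A] [Algebra K A]
variable {M : Type u} [AddCommGroup M] [Module K M] [Module A M]

lemma proj_smul (𝒜 : G → Submodule K A) [DirectSum.Decomposition 𝒜]
    (ℳ : G → Submodule K M) [DirectSum.Decomposition ℳ]
    (hM : ∀ (g h : G) (a : A) (m : M), a ∈ 𝒜 g → m ∈ ℳ h → a • m ∈ ℳ (g * h))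
    {k : G} {a : A} (ha : a ∈ 𝒜 k) (j : G) (m : M) :
    proj ℳ (k * j) (a • m) = a • proj ℳ j m := by
  conv_lhs => rw [← sum_proj ℳ m, Finset.smul_sum, map_sum]
  rw [Finset.sum_eq_single j]
  · exact proj_of_mem_same ℳ (hM k j a _ ha (proj_mem ℳ j m))
  · intro j' _ hj'
    exact proj_of_mem_ne ℳ (hM k j' a _ ha (proj_mem ℳ j' m))
      (fun he => hj' (mul_left_cancel he))
  · intro h; exact absurd (Finset.mem_univ j) h

lemma smul_proj_sum (𝒜 : G → Submodule K A) [DirectSum.Decomposition 𝒜]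
    (ℳ : G → Submodule K M) [DirectSum.Decomposition ℳ]
    (hM : ∀ (g h : G) (a : A) (m : M), a ∈ 𝒜 g → m ∈ ℳ h → a • m ∈ ℳ (g * h))
    (a : A) (j j' : G) (m : M) (hm : m ∈ ℳ j) :
    proj ℳ j' (a • m) = proj 𝒜 (j' * j⁻¹) a • m := by
  conv_lhs => rw [← sum_proj 𝒜 a, Finset.sum_smul, map_sum]
  rw [Finset.sum_eq_single (j' * j⁻¹)]
  · exact proj_of_mem_same ℳ (by simpa using hM (j' * j⁻¹) j _ m (proj_mem 𝒜 _ a) hm)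
  · intro k _ hk
    refine proj_of_mem_ne ℳ (hM k j _ m (proj_mem 𝒜 k a) hm) (fun he => hk ?_)
    rw [← he]; group
  · intro h; exact absurd (Finset.mem_univ _) h

end Smul

section TInd
variable {M : Type u} [AddCommGroup M] [Module K M]

lemma tmul_single_induction {motive : M ⊗[K] (G → K) → Prop}
    (hzero : motive 0) (hadd : ∀ z w, motive z → motive w → motive (z + w))
    (hpure : ∀ (x : M) (l : G), motive (x ⊗ₜ[K] (Pi.single l 1 : G → K)))
    (z : M ⊗[K] (G → K)) : motive z := by
  induction z using TensorProduct.induction_on with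
  | zero => exact hzero
  | add z w hz hw => exact hadd z w hz hw
  | tmul x d =>
    have hd : (x ⊗ₜ[K] d : M ⊗[K] (G → K))
        = ∑ l : G, (d l • x) ⊗ₜ[K] (Pi.single l 1 : G → K) := by
      conv_lhs => rw [← Finset.univ_sum_single d]
      rw [TensorProduct.tmul_sum]
      refine Finset.sum_congr rfl fun l _ => ?_
      rw [single_eq_smul, TensorProduct.tmul_smul, TensorProduct.smul_tmul']
    rw [hd]
    refine Finset.sum_induction _ motive hadd hzero fun l _ => hpure _ l

lemma tmul_single_homog_induction (ℳ : G → Submodule K M) [DirectSum.Decomposition ℳ]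
    {motive : M ⊗[K] (G → K) → Prop}
    (hzero : motive 0) (hadd : ∀ z w, motive z → motive w → motive (z + w))
    (hpure : ∀ (h : G) (x : M), x ∈ ℳ h → ∀ l : G,
      motive (x ⊗ₜ[K] (Pi.single l 1 : G → K)))
    (z : M ⊗[K] (G → K)) : motive z := by
  refine tmul_single_induction hzero hadd (fun x l => ?_) z
  have hx : (x ⊗ₜ[K] (Pi.single l 1 : G → K))
      = ∑ h : G, (proj ℳ h x) ⊗ₜ[K] (Pi.single l 1 : G → K) := by
    rw [← TensorProduct.sum_tmul, sum_proj]
  rw [hx]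
  exact Finset.sum_induction _ motive hadd hzero fun h _ =>
    hpure h _ (proj_mem ℳ h x) l

end TInd

/-- contraction `n ⊗ d ↦ d g • n` -/
noncomputable def contract {M : Type u} [AddCommGroup M] [Module K M] (g : G) :
    M ⊗[K] (G → K) →ₗ[K] M :=
  TensorProduct.lift (LinearMap.mk₂ K (fun n d => d g • n)
    (fun m₁ m₂ n => smul_add _ _ _)
    (fun c m n => smul_comm _ _ _)
    (fun m n₁ n₂ => by simp [add_smul])
    (fun c m n => by simp [mul_smul, smul_comm c]))

@[simp] lemma contract_tmul {M : Type u} [AddCommGroup M] [Module K M] (g : G)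
    (n : M) (d : G → K) : contract g (n ⊗ₜ[K] d) = d g • n := rfl

lemma contract_tmul_single {M : Type u} [AddCommGroup M] [Module K M] (g l : G) (n : M) :
    contract (K := K) g (n ⊗ₜ[K] (Pi.single l 1 : G → K))
      = if l = g then n else 0 := by
  rw [contract_tmul, Pi.single_apply]
  split <;> simp_all [eq_comm]

lemma contract_expand {M : Type u} [AddCommGroup M] [Module K M] (w : M ⊗[K] (G → K)) :
    ∑ g : G, (contract g w) ⊗ₜ[K] (Pi.single g 1 : G → K) = w := by
  induction w using tmul_single_induction with
  | hzero => simp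
  | hadd z w hz hw => simp only [map_add, TensorProduct.add_tmul,
      Finset.sum_add_distrib, hz, hw]
  | hpure x l =>
    rw [Finset.sum_eq_single l]
    · rw [contract_tmul_single]; simp
    · intro g _ hg
      rw [contract_tmul_single]
      simp [Ne.symm hg]
    · intro h; exact absurd (Finset.mem_univ _) h


section Main

variable {A : Type u} [Ring A] [Algebra K A]
variable (𝒜 : G → Submodule K A) [DirectSum.Decomposition 𝒜]
variable {B : Type u} [Ring B] [Algebra K B]
variable {P : Type u} [AddCommGroup P] [Module A P] [Module K P]
variable (℘ : G → Submodule K P) [DirectSum.Decomposition ℘]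
variable {N : Type u} [AddCommGroup N] [Module A N] [Module K N] [SMulCommClass A K N]
variable (hPK : ∀ (k : K) (p : P), algebraMap K A k • p = k • p)
variable (hNK : ∀ (k : K) (n : N), algebraMap K A k • n = k • n)
variable (𝒩 : G → Submodule K N) [DirectSum.Decomposition 𝒩]

/-- an `A`-linear map `P → N` is `K`-linear -/
def toK (f : P →ₗ[A] N) : P →ₗ[K] N where
  toFun := f
  map_add' := f.map_add
  map_smul' k x := by
    show f (k • x) = k • f x
    rw [← hPK, f.map_smul, hNK]

@[simp] lemma toK_apply (f : P →ₗ[A] N) (x : P) : toK hPK hNK f x = f x := rfl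

/-- the `K`-linear map `P ⊗ (KG)^* → N ⊗ (KG)^*` associated to `f` and `g`:
`x_h ⊗ p_l ↦ (f x_h)_{h l g⁻¹} ⊗ p_g`. -/
noncomputable def core (f : P →ₗ[A] N) (g : G) :
    P ⊗[K] (G → K) →ₗ[K] N ⊗[K] (G → K) :=
  TensorProduct.lift (LinearMap.mk₂ K
    (fun x d => ∑ h : G, ∑ l : G, d l •
      ((proj 𝒩 (h * l * g⁻¹) (toK hPK hNK f (proj ℘ h x))) ⊗ₜ[K]
        (Pi.single g 1 : G → K)))
    (fun x₁ x₂ d => by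
      simp only [map_add, TensorProduct.add_tmul, smul_add, Finset.sum_add_distrib])
    (fun c x d => by
      simp only [map_smul, TensorProduct.smul_tmul', Finset.smul_sum]
      refine Finset.sum_congr rfl fun h _ => Finset.sum_congr rfl fun l _ => ?_
      rw [smul_comm])
    (fun x d₁ d₂ => by
      simp only [Pi.add_apply, add_smul, Finset.sum_add_distrib])
    (fun c x d => by
      simp only [Pi.smul_apply, smul_eq_mul, mul_smul, Finset.smul_sum]))

lemma core_tmul (f : P →ₗ[A] N) (g : G) (x : P) (d : G → K) :
    core ℘ hPK hNK 𝒩 f g (x ⊗ₜ[K] d)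
      = ∑ h : G, ∑ l : G, d l •
          ((proj 𝒩 (h * l * g⁻¹) (f (proj ℘ h x))) ⊗ₜ[K] (Pi.single g 1 : G → K)) := rfl

lemma core_tmul_single (f : P →ₗ[A] N) (g : G) (x : P) (l : G) :
    core ℘ hPK hNK 𝒩 f g (x ⊗ₜ[K] (Pi.single l 1 : G → K))
      = ∑ h : G, (proj 𝒩 (h * l * g⁻¹) (f (proj ℘ h x))) ⊗ₜ[K] (Pi.single g 1 : G → K) := by
  rw [core_tmul]
  refine Finset.sum_congr rfl fun h _ => ?_
  rw [Finset.sum_eq_single l]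
  · simp
  · intro l' _ hl'
    rw [Pi.single_apply, if_neg hl', zero_smul]
  · intro h; exact absurd (Finset.mem_univ _) h

lemma core_tmul_single_of_mem (f : P →ₗ[A] N) (g : G) {h : G} {x : P} (hx : x ∈ ℘ h)
    (l : G) :
    core ℘ hPK hNK 𝒩 f g (x ⊗ₜ[K] (Pi.single l 1 : G → K))
      = (proj 𝒩 (h * l * g⁻¹) (f x)) ⊗ₜ[K] (Pi.single g 1 : G → K) := by
  rw [core_tmul_single, Finset.sum_eq_single h]
  · rw [proj_of_mem_same ℘ hx]
  · intro h' _ hh'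
    rw [proj_of_mem_ne ℘ hx (Ne.symm hh'), map_zero, map_zero,
      TensorProduct.zero_tmul]
  · intro h; exact absurd (Finset.mem_univ _) h

lemma core_add (f₁ f₂ : P →ₗ[A] N) (g : G) :
    core ℘ hPK hNK 𝒩 (f₁ + f₂) g = core ℘ hPK hNK 𝒩 f₁ g + core ℘ hPK hNK 𝒩 f₂ g := by
  apply TensorProduct.ext'
  intro x d
  simp only [LinearMap.add_apply, core_tmul, LinearMap.add_apply, map_add,
    TensorProduct.add_tmul, smul_add, Finset.sum_add_distrib]

lemma core_smulK (k : K) (f : P →ₗ[A] N) (g : G) :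
    core ℘ hPK hNK 𝒩 (k • f) g = k • core ℘ hPK hNK 𝒩 f g := by
  apply TensorProduct.ext'
  intro x d
  simp only [core_tmul, LinearMap.smul_apply, map_smul, TensorProduct.smul_tmul',
    Finset.smul_sum]
  refine Finset.sum_congr rfl fun h _ => Finset.sum_congr rfl fun l _ => ?_
  rw [smul_comm]

lemma core_tmul_one (f : P →ₗ[A] N) (g : G) (x : P) :
    core ℘ hPK hNK 𝒩 f g (x ⊗ₜ[K] (1 : G → K))
      = (f x) ⊗ₜ[K] (Pi.single g 1 : G → K) := by
  rw [one_eq_sum_single, TensorProduct.tmul_sum, map_sum]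
  calc ∑ l : G, core ℘ hPK hNK 𝒩 f g (x ⊗ₜ[K] (Pi.single l 1 : G → K))
      = ∑ l : G, ∑ h : G,
          (proj 𝒩 (h * l * g⁻¹) (f (proj ℘ h x))) ⊗ₜ[K] (Pi.single g 1 : G → K) :=
        Finset.sum_congr rfl fun l _ => core_tmul_single ℘ hPK hNK 𝒩 f g x l
    _ = ∑ h : G, (∑ l : G, proj 𝒩 (h * l * g⁻¹) (f (proj ℘ h x))) ⊗ₜ[K]
          (Pi.single g 1 : G → K) := by
        rw [Finset.sum_comm]
        exact Finset.sum_congr rfl fun h _ => (TensorProduct.sum_tmul _ _ _).symm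
    _ = ∑ h : G, (f (proj ℘ h x)) ⊗ₜ[K] (Pi.single g 1 : G → K) :=
        Finset.sum_congr rfl fun h _ => by rw [sum_proj_conj]
    _ = (f x) ⊗ₜ[K] (Pi.single g 1 : G → K) := by
        rw [← TensorProduct.sum_tmul, ← map_sum, sum_proj]

section Act

variable {𝒜} in
theorem _dummy_check : True := trivial

variable {𝒜}
variable (HS : IsSmashProduct K A G 𝒜 B)
variable {M : Type u} [AddCommGroup M] [Module A M] [Module K M]
variable (ℳ : G → Submodule K M) [DirectSum.Decomposition ℳ]
variable [Module B (M ⊗[K] (G → K))]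
variable (hMB : ∀ (a : A) (g : G) (m : M) (h : G),
    (HS.ι a * HS.u g) • (m ⊗ₜ[K] (Pi.single h (1 : K) : G → K)) =
      (a • ((DirectSum.decompose ℳ m (g * h⁻¹) : ℳ (g * h⁻¹)) : M)) ⊗ₜ[K]
        (Pi.single h (1 : K) : G → K))

omit [DirectSum.Decomposition 𝒜] in
lemma sum_proj_shift (h : G) (m : M) : ∑ g : G, proj ℳ (g * h⁻¹) m = m := by
  have := Equiv.sum_comp (Equiv.mulRight h⁻¹) (fun j => proj ℳ j m)
  simp only [Equiv.coe_mulRight] at this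
  rw [this, sum_proj]

include hMB

lemma iotaU_smul (a : A) (g : G) (m : M) (h : G) :
    (HS.ι a * HS.u g) • (m ⊗ₜ[K] (Pi.single h (1 : K) : G → K))
      = (a • proj ℳ (g * h⁻¹) m) ⊗ₜ[K] (Pi.single h (1 : K) : G → K) := hMB a g m h

lemma u_smul (g : G) (m : M) (h : G) :
    HS.u g • (m ⊗ₜ[K] (Pi.single h (1 : K) : G → K))
      = (proj ℳ (g * h⁻¹) m) ⊗ₜ[K] (Pi.single h (1 : K) : G → K) := by
  have h1 := iotaU_smul HS ℳ hMB 1 g m h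
  rwa [map_one, one_mul, one_smul] at h1

lemma iota_smul (a : A) (m : M) (h : G) :
    HS.ι a • (m ⊗ₜ[K] (Pi.single h (1 : K) : G → K))
      = (a • m) ⊗ₜ[K] (Pi.single h (1 : K) : G → K) := by
  have h1 : HS.ι a = ∑ g : G, HS.ι a * HS.u g := by
    rw [← Finset.mul_sum, HS.sum_u, mul_one]
  rw [h1, Finset.sum_smul]
  calc ∑ g : G, (HS.ι a * HS.u g) • (m ⊗ₜ[K] (Pi.single h (1 : K) : G → K))
      = ∑ g : G, (a • proj ℳ (g * h⁻¹) m) ⊗ₜ[K] (Pi.single h (1 : K) : G → K) :=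
        Finset.sum_congr rfl fun g _ => iotaU_smul HS ℳ hMB a g m h
    _ = (a • ∑ g : G, proj ℳ (g * h⁻¹) m) ⊗ₜ[K] (Pi.single h (1 : K) : G → K) := by
        rw [Finset.smul_sum, TensorProduct.sum_tmul]
    _ = (a • m) ⊗ₜ[K] (Pi.single h (1 : K) : G → K) := by
        rw [sum_proj_shift]

lemma iota_smul_one (a : A) (m : M) :
    HS.ι a • (m ⊗ₜ[K] (1 : G → K)) = (a • m) ⊗ₜ[K] (1 : G → K) := by
  rw [one_eq_sum_single, TensorProduct.tmul_sum, Finset.smul_sum,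
    TensorProduct.tmul_sum]
  exact Finset.sum_congr rfl fun l _ => iota_smul HS ℳ hMB a m l

end Act

section Blin

variable {𝒜}
variable (HS : IsSmashProduct K A G 𝒜 B)
variable [Module B (P ⊗[K] (G → K))] [Module B (N ⊗[K] (G → K))]
variable (hP : ∀ (g h : G) (a : A) (p : P), a ∈ 𝒜 g → p ∈ ℘ h → a • p ∈ ℘ (g * h))
variable (hN : ∀ (g h : G) (a : A) (n : N), a ∈ 𝒜 g → n ∈ 𝒩 h → a • n ∈ 𝒩 (g * h))
variable (hPB : ∀ (a : A) (g : G) (m : P) (h : G),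
    (HS.ι a * HS.u g) • (m ⊗ₜ[K] (Pi.single h (1 : K) : G → K)) =
      (a • ((DirectSum.decompose ℘ m (g * h⁻¹) : ℘ (g * h⁻¹)) : P)) ⊗ₜ[K]
        (Pi.single h (1 : K) : G → K))
variable (hNB : ∀ (a : A) (g : G) (n : N) (h : G),
    (HS.ι a * HS.u g) • (n ⊗ₜ[K] (Pi.single h (1 : K) : G → K)) =
      (a • ((DirectSum.decompose 𝒩 n (g * h⁻¹) : 𝒩 (g * h⁻¹)) : N)) ⊗ₜ[K]
        (Pi.single h (1 : K) : G → K))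

include hP hN hPB hNB

lemma core_smul_basic (f : P →ₗ[A] N) (g : G) (a : A) (m : G) (z : P ⊗[K] (G → K)) :
    core ℘ hPK hNK 𝒩 f g ((HS.ι a * HS.u m) • z)
      = (HS.ι a * HS.u m) • core ℘ hPK hNK 𝒩 f g z := by
  induction z using tmul_single_induction with
  | hzero => rw [smul_zero, map_zero, smul_zero]
  | hadd z w hz hw => rw [smul_add, map_add, map_add, smul_add, hz, hw]
  | hpure x l =>
    set y : P := proj ℘ (m * l⁻¹) x with hy
    have hymem : y ∈ ℘ (m * l⁻¹) := proj_mem ℘ _ x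
    set w : N := proj 𝒩 (m * g⁻¹) (f y) with hw
    have hLHS : core ℘ hPK hNK 𝒩 f g
        ((HS.ι a * HS.u m) • (x ⊗ₜ[K] (Pi.single l 1 : G → K)))
        = (a • w) ⊗ₜ[K] (Pi.single g 1 : G → K) := by
      rw [iotaU_smul HS ℘ hPB a m x l, core_tmul_single]
      have hterm : ∀ h : G,
          proj 𝒩 (h * l * g⁻¹) (f (proj ℘ h (a • y)))
            = proj 𝒜 (h * (m * l⁻¹)⁻¹) a • w := by
        intro h
        rw [smul_proj_sum 𝒜 ℘ hP a (m * l⁻¹) h y hymem, f.map_smul]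
        have hidx : h * l * g⁻¹ = (h * (m * l⁻¹)⁻¹) * (m * g⁻¹) := by group
        rw [hidx, proj_smul 𝒜 𝒩 hN (proj_mem 𝒜 _ a) (m * g⁻¹) (f y)]
      calc ∑ h : G, proj 𝒩 (h * l * g⁻¹) (f (proj ℘ h (a • y))) ⊗ₜ[K]
              (Pi.single g 1 : G → K)
          = ∑ h : G, (proj 𝒜 (h * (m * l⁻¹)⁻¹) a • w) ⊗ₜ[K] (Pi.single g 1 : G → K) :=
            Finset.sum_congr rfl fun h _ => by rw [hterm h]
        _ = ∑ k : G, (proj 𝒜 k a • w) ⊗ₜ[K] (Pi.single g 1 : G → K) := by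
            have := Equiv.sum_comp (Equiv.mulRight (m * l⁻¹)⁻¹)
              (fun k => (proj 𝒜 k a • w) ⊗ₜ[K] (Pi.single g 1 : G → K))
            simp only [Equiv.coe_mulRight] at this
            exact this
        _ = (a • w) ⊗ₜ[K] (Pi.single g 1 : G → K) := by
            rw [← TensorProduct.sum_tmul, ← Finset.sum_smul, sum_proj]
    have hRHS : (HS.ι a * HS.u m) •
        core ℘ hPK hNK 𝒩 f g (x ⊗ₜ[K] (Pi.single l 1 : G → K))
        = (a • w) ⊗ₜ[K] (Pi.single g 1 : G → K) := by
      rw [core_tmul_single, Finset.smul_sum]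
      rw [Finset.sum_eq_single (m * l⁻¹)]
      · rw [iotaU_smul HS 𝒩 hNB]
        have hidx : m * l⁻¹ * l * g⁻¹ = m * g⁻¹ := by group
        rw [hidx, proj_of_mem_same 𝒩 (proj_mem 𝒩 _ _)]
      · intro h _ hh
        have hne : (h * l * g⁻¹) ≠ m * g⁻¹ := by
          intro he
          apply hh
          have h2 : h * l = m := mul_right_cancel he
          rw [← h2]; group
        rw [iotaU_smul HS 𝒩 hNB, proj_of_mem_ne 𝒩 (proj_mem 𝒩 _ _) hne, smul_zero,
          TensorProduct.zero_tmul]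
      · intro hmem; exact absurd (Finset.mem_univ _) hmem
    rw [hLHS, hRHS]

lemma core_smul (f : P →ₗ[A] N) (g : G) (b : B) (z : P ⊗[K] (G → K)) :
    core ℘ hPK hNK 𝒩 f g (b • z) = b • core ℘ hPK hNK 𝒩 f g z := by
  obtain ⟨c, hc, -⟩ := HS.free b
  rw [hc, Finset.sum_smul, Finset.sum_smul, map_sum]
  exact Finset.sum_congr rfl fun m _ =>
    core_smul_basic ℘ hPK hNK 𝒩 HS hP hN hPB hNB f g (c m) m z

/-- bundled `B`-linear version of `core` -/
noncomputable def coreB (f : P →ₗ[A] N) (g : G) :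
    (P ⊗[K] (G → K)) →ₗ[B] (N ⊗[K] (G → K)) where
  toFun := core ℘ hPK hNK 𝒩 f g
  map_add' := map_add _
  map_smul' b z := core_smul ℘ hPK hNK 𝒩 HS hP hN hPB hNB f g b z

@[simp] lemma coreB_apply (f : P →ₗ[A] N) (g : G) (z : P ⊗[K] (G → K)) :
    coreB ℘ hPK hNK 𝒩 HS hP hN hPB hNB f g z = core ℘ hPK hNK 𝒩 f g z := rfl

variable [SMulCommClass B K (N ⊗[K] (G → K))]

/-- the forward map -/
noncomputable def Fwd :
    ((P →ₗ[A] N) ⊗[K] (G → K)) →ₗ[K] ((P ⊗[K] (G → K)) →ₗ[B] (N ⊗[K] (G → K))) :=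
  TensorProduct.lift (LinearMap.mk₂ K
    (fun f c => ∑ g : G, c g • coreB ℘ hPK hNK 𝒩 HS hP hN hPB hNB f g)
    (fun f₁ f₂ c => by
      rw [← Finset.sum_add_distrib]
      refine Finset.sum_congr rfl fun g _ => ?_
      rw [← smul_add]
      congr 1
      refine LinearMap.ext fun z => ?_
      simp only [coreB_apply, LinearMap.add_apply, core_add])
    (fun k f c => by
      rw [Finset.smul_sum]
      refine Finset.sum_congr rfl fun g _ => ?_
      rw [smul_comm]
      congr 1
      refine LinearMap.ext fun z => ?_
      simp only [coreB_apply, LinearMap.smul_apply, core_smulK])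
    (fun f c₁ c₂ => by
      rw [← Finset.sum_add_distrib]
      exact Finset.sum_congr rfl fun g _ => by rw [Pi.add_apply, add_smul])
    (fun k f c => by
      rw [Finset.smul_sum]
      exact Finset.sum_congr rfl fun g _ => by
        rw [Pi.smul_apply, smul_eq_mul, mul_smul]))

lemma Fwd_tmul_single (f : P →ₗ[A] N) (g : G) :
    Fwd ℘ hPK hNK 𝒩 HS hP hN hPB hNB (f ⊗ₜ[K] (Pi.single g 1 : G → K))
      = coreB ℘ hPK hNK 𝒩 HS hP hN hPB hNB f g := by
  show ∑ g' : G, (Pi.single g 1 : G → K) g' • _ = _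
  rw [Finset.sum_eq_single g]
  · rw [Pi.single_eq_same, one_smul]
  · intro g' _ hg'
    rw [Pi.single_eq_of_ne hg', zero_smul]
  · intro hmem; exact absurd (Finset.mem_univ _) hmem

lemma contract_iota_smul (g : G) (a : A) (w : N ⊗[K] (G → K)) :
    contract g (HS.ι a • w) = a • contract g w := by
  induction w using tmul_single_induction with
  | hzero => rw [smul_zero, map_zero, smul_zero]
  | hadd z w hz hw => rw [smul_add, map_add, map_add, smul_add, hz, hw]
  | hpure n l =>
    rw [iota_smul HS 𝒩 hNB, contract_tmul_single, contract_tmul_single]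
    split
    · rfl
    · rw [smul_zero]

/-- the `g`-component of the inverse image of `Ψ` -/
noncomputable def psi (Ψ : (P ⊗[K] (G → K)) →ₗ[B] (N ⊗[K] (G → K))) (g : G) :
    P →ₗ[A] N where
  toFun x := contract g (Ψ (x ⊗ₜ[K] (1 : G → K)))
  map_add' x x' := by
    show contract g (Ψ ((x + x') ⊗ₜ[K] (1 : G → K))) = _
    rw [TensorProduct.add_tmul, map_add, map_add]
  map_smul' a x := by
    show contract g (Ψ ((a • x) ⊗ₜ[K] (1 : G → K)))
      = a • contract g (Ψ (x ⊗ₜ[K] (1 : G → K)))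
    rw [← iota_smul_one HS ℘ hPB a x, Ψ.map_smul]
    exact contract_iota_smul (℘ := ℘) (𝒩 := 𝒩) (HS := HS) (hP := hP) (hN := hN)
      (hPB := hPB) (hNB := hNB) g a _

@[simp] lemma psi_apply (Ψ : (P ⊗[K] (G → K)) →ₗ[B] (N ⊗[K] (G → K))) (g : G) (x : P) :
    psi ℘ 𝒩 HS hP hN hPB hNB Ψ g x = contract g (Ψ (x ⊗ₜ[K] (1 : G → K))) := rfl

/-- the inverse map -/
noncomputable def Inv :
    ((P ⊗[K] (G → K)) →ₗ[B] (N ⊗[K] (G → K))) →ₗ[K] ((P →ₗ[A] N) ⊗[K] (G → K)) where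
  toFun Ψ := ∑ g : G, (psi ℘ 𝒩 HS hP hN hPB hNB Ψ g) ⊗ₜ[K]
    (Pi.single g 1 : G → K)
  map_add' Ψ Ψ' := by
    rw [← Finset.sum_add_distrib]
    refine Finset.sum_congr rfl fun g _ => ?_
    rw [← TensorProduct.add_tmul]
    congr 1
    refine LinearMap.ext fun x => ?_
    simp only [psi_apply, LinearMap.add_apply, map_add]
  map_smul' k Ψ := by
    show _ = k • ∑ g : G, _
    rw [Finset.smul_sum]
    refine Finset.sum_congr rfl fun g _ => ?_
    rw [TensorProduct.smul_tmul']
    congr 1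
    refine LinearMap.ext fun x => ?_
    simp only [psi_apply, LinearMap.smul_apply, map_smul]

lemma left_inv (Ψ : (P ⊗[K] (G → K)) →ₗ[B] (N ⊗[K] (G → K))) :
    Fwd ℘ hPK hNK 𝒩 HS hP hN hPB hNB
      (Inv ℘ 𝒩 HS hP hN hPB hNB Ψ) = Ψ := by
  refine LinearMap.ext fun z => ?_
  induction z using tmul_single_homog_induction ℘ with
  | hzero => rw [map_zero, map_zero]
  | hadd z w hz hw => rw [map_add, map_add, hz, hw]
  | hpure h x hx l =>
    have hInv : Inv ℘ 𝒩 HS hP hN hPB hNB Ψ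
        = ∑ g : G, (psi ℘ 𝒩 HS hP hN hPB hNB Ψ g) ⊗ₜ[K]
            (Pi.single g 1 : G → K) := rfl
    have hLHS : Fwd ℘ hPK hNK 𝒩 HS hP hN hPB hNB
        (Inv ℘ 𝒩 HS hP hN hPB hNB Ψ) (x ⊗ₜ[K] (Pi.single l 1 : G → K))
        = ∑ g : G, (proj 𝒩 (h * l * g⁻¹)
            (psi ℘ 𝒩 HS hP hN hPB hNB Ψ g x)) ⊗ₜ[K]
              (Pi.single g 1 : G → K) := by
      rw [hInv, map_sum, LinearMap.sum_apply]
      refine Finset.sum_congr rfl fun g _ => ?_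
      rw [Fwd_tmul_single, coreB_apply, core_tmul_single_of_mem ℘ hPK hNK 𝒩 _ _ hx]
    have hx1 : HS.u (h * l) • (x ⊗ₜ[K] (1 : G → K))
        = x ⊗ₜ[K] (Pi.single l 1 : G → K) := by
      rw [one_eq_sum_single, TensorProduct.tmul_sum, Finset.smul_sum]
      rw [Finset.sum_eq_single l]
      · rw [u_smul HS ℘ hPB, show h * l * l⁻¹ = h by group, proj_of_mem_same ℘ hx]
      · intro l' _ hl'
        have hne : h ≠ h * l * l'⁻¹ := by
          intro he
          apply hl'
          have h2 : h * (l * l'⁻¹) = h * 1 := by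
            rw [mul_one, ← mul_assoc]; exact he.symm
          exact (mul_inv_eq_one.mp (mul_left_cancel h2)).symm
        rw [u_smul HS ℘ hPB, proj_of_mem_ne ℘ hx hne, TensorProduct.zero_tmul]
      · intro hmem; exact absurd (Finset.mem_univ _) hmem
    have hRHS : Ψ (x ⊗ₜ[K] (Pi.single l 1 : G → K))
        = ∑ g : G, (proj 𝒩 (h * l * g⁻¹)
            (psi ℘ 𝒩 HS hP hN hPB hNB Ψ g x)) ⊗ₜ[K]
              (Pi.single g 1 : G → K) := by
      rw [← hx1, Ψ.map_smul]
      conv_lhs => rw [← contract_expand (Ψ (x ⊗ₜ[K] (1 : G → K)))]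
      rw [Finset.smul_sum]
      exact Finset.sum_congr rfl fun g _ => u_smul HS 𝒩 hNB (h * l) _ g
    rw [hLHS, hRHS]

lemma right_inv (t : (P →ₗ[A] N) ⊗[K] (G → K)) :
    Inv ℘ 𝒩 HS hP hN hPB hNB
      (Fwd ℘ hPK hNK 𝒩 HS hP hN hPB hNB t) = t := by
  induction t using tmul_single_induction with
  | hzero => rw [map_zero, map_zero]
  | hadd z w hz hw => rw [map_add, map_add, hz, hw]
  | hpure f g₀ =>
    rw [Fwd_tmul_single]
    have hpsi : ∀ g : G, psi ℘ 𝒩 HS hP hN hPB hNB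
        (coreB ℘ hPK hNK 𝒩 HS hP hN hPB hNB f g₀) g
          = if g₀ = g then f else 0 := by
      intro g
      refine LinearMap.ext fun x => ?_
      rw [psi_apply, coreB_apply, core_tmul_one, contract_tmul_single]
      split
      · rfl
      · rfl
    show ∑ g : G, _ ⊗ₜ[K] _ = _
    rw [Finset.sum_eq_single g₀]
    · rw [hpsi, if_pos rfl]
    · intro g _ hg
      rw [hpsi, if_neg (Ne.symm hg), TensorProduct.zero_tmul]
    · intro hmem; exact absurd (Finset.mem_univ _) hmem

end Blin

end Main

end Stmt15Aux

theorem stmt15 (K : Type u) [Field K] (A : Type u) [Ring A] [Algebra K A]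
    (G : Type u) [Group G] [Fintype G] [DecidableEq G]
    -- the G-grading on A
    (𝒜 : G → Submodule K A) [DirectSum.Decomposition 𝒜]
    (hone : (1 : A) ∈ 𝒜 1)
    (hmul : ∀ (g h : G) (a b : A), a ∈ 𝒜 g → b ∈ 𝒜 h → a * b ∈ 𝒜 (g * h))
    -- the smash product B = A # G^*
    (B : Type u) [Ring B] [Algebra K B]
    (HS : IsSmashProduct K A G 𝒜 B)
    -- P : a finitely generated graded projective A-module
    (P : Type u) [AddCommGroup P] [Module A P] [Module K P]
    (hPK : ∀ (k : K) (p : P), algebraMap K A k • p = k • p)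
    (℘ : G → Submodule K P) [DirectSum.Decomposition ℘]
    (hP : ∀ (g h : G) (a : A) (p : P), a ∈ 𝒜 g → p ∈ ℘ h → a • p ∈ ℘ (g * h))
    [Module.Finite A P] (hproj : Module.Projective A P)
    -- N : a graded A-module
    (N : Type u) [AddCommGroup N] [Module A N] [Module K N] [SMulCommClass A K N]
    (hNK : ∀ (k : K) (n : N), algebraMap K A k • n = k • n)
    (𝒩 : G → Submodule K N) [DirectSum.Decomposition 𝒩]
    (hN : ∀ (g h : G) (a : A) (n : N), a ∈ 𝒜 g → n ∈ 𝒩 h → a • n ∈ 𝒩 (g * h))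
    -- the A # G^*-module structure on P ⊗_K (KG)^* : (a # p_g)(m ⊗ p_h) = a m_{gh⁻¹} ⊗ p_h
    [Module B (P ⊗[K] (G → K))]
    (hPB : ∀ (a : A) (g : G) (m : P) (h : G),
      (HS.ι a * HS.u g) • (m ⊗ₜ[K] (Pi.single h (1 : K) : G → K)) =
        (a • ((DirectSum.decompose ℘ m (g * h⁻¹) : ℘ (g * h⁻¹)) : P)) ⊗ₜ[K]
          (Pi.single h (1 : K) : G → K))
    -- the A # G^*-module structure on N ⊗_K (KG)^*
    [Module B (N ⊗[K] (G → K))] [SMulCommClass B K (N ⊗[K] (G → K))]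
    (hNB : ∀ (a : A) (g : G) (n : N) (h : G),
      (HS.ι a * HS.u g) • (n ⊗ₜ[K] (Pi.single h (1 : K) : G → K)) =
        (a • ((DirectSum.decompose 𝒩 n (g * h⁻¹) : 𝒩 (g * h⁻¹)) : N)) ⊗ₜ[K]
          (Pi.single h (1 : K) : G → K)) :
    ∃ Θ : ((P →ₗ[A] N) ⊗[K] (G → K)) ≃ₗ[K] ((P ⊗[K] (G → K)) →ₗ[B] (N ⊗[K] (G → K))),
      ∀ (f : P →ₗ[A] N) (g : G) (h : G) (x : P), x ∈ ℘ h → ∀ l : G,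
        Θ (f ⊗ₜ[K] (Pi.single g (1 : K) : G → K)) (x ⊗ₜ[K] (Pi.single l (1 : K) : G → K)) =
          ((DirectSum.decompose 𝒩 (f x) (h * l * g⁻¹) : 𝒩 (h * l * g⁻¹)) : N) ⊗ₜ[K]
            (Pi.single g (1 : K) : G → K) := by
  classical
  refine ⟨LinearEquiv.ofLinear
    (Stmt15Aux.Fwd ℘ hPK hNK 𝒩 HS hP hN hPB hNB)
    (Stmt15Aux.Inv ℘ 𝒩 HS hP hN hPB hNB)
    (LinearMap.ext fun Ψ => Stmt15Aux.left_inv ℘ hPK hNK 𝒩 HS hP hN hPB hNB Ψ)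
    (LinearMap.ext fun t => Stmt15Aux.right_inv ℘ hPK hNK 𝒩 HS hP hN hPB hNB t), ?_⟩
  intro f g h x hx l
  rw [LinearEquiv.ofLinear_apply, Stmt15Aux.Fwd_tmul_single, Stmt15Aux.coreB_apply,
    Stmt15Aux.core_tmul_single_of_mem ℘ hPK hNK 𝒩 f g hx l]
  rfl
end

section
/- Let G be a finite group, A a G-graded K-algebra, M a graded A-module admitting a resolution by finitely generated graded projective A-modules, and N a graded A-module. Then for each i ≥ 0 there is a K-vector space isomorphism Ext^i_A(M, N) ⊗_K (KG)^* ≅ Ext^i_{A#G^*}(M ⊗_K (KG)^*, N ⊗_K (KG)^*). -/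
open CategoryTheory DirectSum

universe u

/-!
Induction `X ↦ B ⊗_A X` is exact (as a right `A`-module `B` is free on the `u g`) and left
adjoint to restriction along `ι`, which preserves epimorphisms; so it carries a projective
resolution `P` of `M` to a projective resolution of `B ⊗_A M`. The grading of `M` identifies
`B ⊗_A M` with `M ⊗ (KG)^*`, and restricted to `A` the module `N ⊗ (KG)^*` is just `N^G`.
Hence `Hom_B(B ⊗_A P, N ⊗ (KG)^*) ≅ Hom_A(P, N)^G` as complexes, and taking cohomology gives
`Ext^i_B(M ⊗ (KG)^*, N ⊗ (KG)^*) ≅ Ext^i_A(M, N)^G ≅ Ext^i_A(M, N) ⊗ (KG)^*`.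
-/

section GradedProj

variable {G K V : Type*} [DecidableEq G] [Semiring K] [AddCommMonoid V] [Module K V]
  (𝒱 : G → Submodule K V) [Decomposition 𝒱]

def gradedProj (g : G) : V →ₗ[K] V :=
  (𝒱 g).subtype ∘ₗ component K G (fun g => 𝒱 g) g ∘ₗ (decomposeLinearEquiv 𝒱).toLinearMap

lemma gradedProj_apply (g : G) (v : V) : gradedProj 𝒱 g v = (decompose 𝒱 v g : V) := rfl

lemma gradedProj_mem (g : G) (v : V) : gradedProj 𝒱 g v ∈ 𝒱 g := (decompose 𝒱 v g).2

lemma gradedProj_of_mem {v : V} {g : G} (hv : v ∈ 𝒱 g) (g' : G) :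
    gradedProj 𝒱 g' v = if g = g' then v else 0 := by
  split_ifs with h
  · subst h; exact decompose_of_mem_same 𝒱 hv
  · exact decompose_of_mem_ne 𝒱 hv h

lemma gradedProj_gradedProj (g g' : G) (v : V) :
    gradedProj 𝒱 g' (gradedProj 𝒱 g v) = if g = g' then gradedProj 𝒱 g v else 0 :=
  gradedProj_of_mem 𝒱 (gradedProj_mem 𝒱 g v) g'

lemma sum_gradedProj [Fintype G] (v : V) : ∑ g, gradedProj 𝒱 g v = v := by
  conv_rhs => rw [← (decompose 𝒱).symm_apply_apply v, ← sum_univ_of (decompose 𝒱 v),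
    decompose_symm_sum]
  simp only [decompose_symm_of, gradedProj_apply]

variable [Group G] [Fintype G]

lemma sum_gradedProj_mul_inv (v : V) (k : G) : ∑ h, gradedProj 𝒱 (h * k⁻¹) v = v := by
  conv_rhs => rw [← sum_gradedProj 𝒱 v]
  exact Fintype.sum_equiv (Equiv.mulRight k⁻¹) _ _ fun _ => rfl

lemma sum_gradedProj_mul_inv' (v : V) (k : G) : ∑ h, gradedProj 𝒱 (k * h⁻¹) v = v := by
  conv_rhs => rw [← sum_gradedProj 𝒱 v]
  exact Fintype.sum_equiv ((Equiv.inv G).trans (Equiv.mulLeft k)) _ _ fun _ => rfl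

def regrade : (G → V) ≃+ (G → V) where
  toFun f h := ∑ g, gradedProj 𝒱 (g * h⁻¹) (f g)
  invFun w g := ∑ h, gradedProj 𝒱 (g * h⁻¹) (w h)
  left_inv f := by
    funext g
    simp only [map_sum, gradedProj_gradedProj, mul_left_inj, Finset.sum_ite_eq',
      Finset.mem_univ, if_true, sum_gradedProj_mul_inv']
  right_inv w := by
    funext h
    simp only [map_sum, gradedProj_gradedProj, mul_right_inj, inv_inj, Finset.sum_ite_eq',
      Finset.mem_univ, if_true, sum_gradedProj_mul_inv]
  map_add' f f' := by
    funext h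
    simp only [Pi.add_apply, map_add, Finset.sum_add_distrib]

lemma regrade_apply (f : G → V) (h : G) :
    regrade 𝒱 f h = ∑ g, gradedProj 𝒱 (g * h⁻¹) (f g) := rfl

end GradedProj

section GradedModule

variable {G K A V : Type*} [Group G] [Fintype G] [DecidableEq G] [CommSemiring K] [Semiring A]
  [Algebra K A] [AddCommMonoid V] [Module A V] [Module K V]
  (𝒜 : G → Submodule K A) [Decomposition 𝒜] (𝒱 : G → Submodule K V) [Decomposition 𝒱]
  (hV : ∀ (g h : G) (a : A) (v : V), a ∈ 𝒜 g → v ∈ 𝒱 h → a • v ∈ 𝒱 (g * h))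
include hV

lemma gradedProj_smul_of_mem_right (a : A) {v : V} {d : G} (hv : v ∈ 𝒱 d) (c : G) :
    gradedProj 𝒱 c (a • v) = gradedProj 𝒜 (c * d⁻¹) a • v := by
  conv_lhs => rw [← sum_gradedProj 𝒜 a, Finset.sum_smul, map_sum]
  simp_rw [gradedProj_of_mem 𝒱 (hV _ _ _ _ (gradedProj_mem 𝒜 _ a) hv), ← eq_mul_inv_iff_mul_eq]
  simp

omit [Decomposition 𝒜] in
lemma gradedProj_smul_of_mem_left {a : A} {e : G} (ha : a ∈ 𝒜 e) (v : V) (c : G) :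
    gradedProj 𝒱 c (a • v) = a • gradedProj 𝒱 (e⁻¹ * c) v := by
  conv_lhs => rw [← sum_gradedProj 𝒱 v, Finset.smul_sum, map_sum]
  simp_rw [gradedProj_of_mem 𝒱 (hV _ _ _ _ ha (gradedProj_mem 𝒱 _ v)), ← eq_inv_mul_iff_mul_eq]
  simp

end GradedModule

namespace IsSmashProduct

variable {K A G B : Type u} [Field K] [Ring A] [Algebra K A] [Group G] [Fintype G]
  [DecidableEq G] {𝒜 : G → Submodule K A} [Decomposition 𝒜] [Ring B] [Algebra K B]
  (HS : IsSmashProduct K A G 𝒜 B)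

section Coordinates

def ofCoeff : (G → A) →+ B where
  toFun c := ∑ g, HS.ι (c g) * HS.u g
  map_zero' := by simp
  map_add' c c' := by simp [add_mul, Finset.sum_add_distrib]

lemma ofCoeff_apply (c : G → A) : HS.ofCoeff c = ∑ g, HS.ι (c g) * HS.u g := rfl

lemma ofCoeff_bijective : Function.Bijective HS.ofCoeff :=
  Function.bijective_iff_existsUnique _ |>.2 fun b =>
    (HS.free b).imp fun _ ⟨hc, huniq⟩ => ⟨hc.symm, fun c' hc' => huniq c' hc'.symm⟩

noncomputable def coeff : B ≃+ (G → A) :=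
  (AddEquiv.ofBijective HS.ofCoeff HS.ofCoeff_bijective).symm

lemma sum_coeff (b : B) : ∑ g, HS.ι (HS.coeff b g) * HS.u g = b :=
  (AddEquiv.ofBijective HS.ofCoeff HS.ofCoeff_bijective).apply_symm_apply b

lemma coeff_ofCoeff (c : G → A) : HS.coeff (HS.ofCoeff c) = c :=
  (AddEquiv.ofBijective HS.ofCoeff HS.ofCoeff_bijective).symm_apply_apply c

lemma coeff_ι_mul_u (a : A) (g : G) : HS.coeff (HS.ι a * HS.u g) = Pi.single g a := by
  rw [← coeff_ofCoeff HS (Pi.single g a), ofCoeff_apply, Finset.sum_eq_single g]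
  · simp
  · intro h _ hne; simp [hne]
  · simp

lemma ι_eq_sum_mul_u (a : A) : HS.ι a = ∑ g, HS.ι a * HS.u g := by
  rw [← Finset.mul_sum, HS.sum_u, mul_one]

lemma coeff_ι (a : A) : HS.coeff (HS.ι a) = fun _ => a := by
  rw [ι_eq_sum_mul_u HS a, ← ofCoeff_apply, coeff_ofCoeff]

lemma coeff_one : HS.coeff 1 = fun _ => 1 := by
  rw [← map_one HS.ι, coeff_ι]

lemma ι_mul_u_mul_ι_mul_u (a a' : A) (h k : G) :
    HS.ι a * HS.u h * (HS.ι a' * HS.u k) = HS.ι (a * gradedProj 𝒜 (h * k⁻¹) a') * HS.u k := by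
  rw [mul_assoc, HS.comm, ← mul_assoc, ← map_mul, gradedProj_apply]

lemma coeff_mul (b b' : B) (k : G) :
    HS.coeff (b * b') k = ∑ h, HS.coeff b h * gradedProj 𝒜 (h * k⁻¹) (HS.coeff b' k) := by
  have : b * b' =
      HS.ofCoeff fun k => ∑ h, HS.coeff b h * gradedProj 𝒜 (h * k⁻¹) (HS.coeff b' k) := by
    conv_lhs => rw [← sum_coeff HS b, ← sum_coeff HS b']
    simp_rw [ofCoeff_apply, Finset.sum_mul_sum, ι_mul_u_mul_ι_mul_u, map_sum, Finset.sum_mul]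
    exact Finset.sum_comm
  rw [this, coeff_ofCoeff]

lemma ι_mul_u_of_mem {z : A} {d : G} (hz : z ∈ 𝒜 d) (h : G) :
    HS.ι z * HS.u h = HS.u (d * h) * HS.ι z := by
  conv_rhs => rw [ι_eq_sum_mul_u HS z, Finset.mul_sum]
  simp_rw [HS.comm, ← gradedProj_apply, gradedProj_of_mem 𝒜 hz]
  rw [Finset.sum_eq_single h]
  · simp
  · intro k _ hk
    rw [if_neg, map_zero, zero_mul]
    rwa [eq_comm, mul_assoc, mul_eq_left, mul_inv_eq_one, eq_comm]
  · simp

lemma u_mul_ι_gradedProj (a : A) (g k : G) :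
    HS.u k * HS.ι (gradedProj 𝒜 (k * g⁻¹) a) = HS.ι (gradedProj 𝒜 (k * g⁻¹) a) * HS.u g := by
  rw [HS.ι_mul_u_of_mem (gradedProj_mem 𝒜 _ a), inv_mul_cancel_right]

lemma mul_u_smul_sum_u_smul {Y : Type*} [AddCommGroup Y] [Module B Y] (b : B) (g : G)
    (y : G → Y) : (b * HS.u g) • ∑ k, HS.u k • y k = (b * HS.u g) • y g := by
  rw [Finset.smul_sum, Finset.sum_eq_single g]
  · rw [smul_smul, mul_assoc, HS.idem]
  · intro k _ hk; rw [smul_smul, mul_assoc, HS.orth g k (Ne.symm hk), mul_zero, zero_smul]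
  · simp

lemma map_smul_of_map_ι_mul_u_smul {Y Z : Type*} [AddCommGroup Y] [Module B Y] [AddCommGroup Z]
    [Module B Z] (f : Y →+ Z)
    (hf : ∀ a g y, f ((HS.ι a * HS.u g) • y) = (HS.ι a * HS.u g) • f y) (b : B) (y : Y) :
    f (b • y) = b • f y := by
  rw [← HS.sum_coeff b, Finset.sum_smul, Finset.sum_smul, map_sum]
  simp only [hf]

end Coordinates

section Induction

variable {X : Type*} [AddCommGroup X] [Module A X]

noncomputable def inducedSMul (b : B) (f : G → X) (g : G) : X :=
  ∑ h, gradedProj 𝒜 (g * h⁻¹) (HS.coeff b h) • f h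

lemma inducedSMul_ι_mul_u (a : A) (g : G) (f : G → X) :
    HS.inducedSMul (HS.ι a * HS.u g) f = fun k => gradedProj 𝒜 (k * g⁻¹) a • f g := by
  funext k
  simp only [inducedSMul, coeff_ι_mul_u]
  rw [Finset.sum_eq_single g (fun h _ hne => by simp [hne]) (by simp), Pi.single_eq_same]

lemma inducedSMul_ι_const (a : A) (x : X) :
    HS.inducedSMul (HS.ι a) (fun _ => x) = fun _ => a • x := by
  funext k
  simp only [inducedSMul, coeff_ι]
  rw [← Finset.sum_smul, sum_gradedProj_mul_inv']

lemma inducedSMul_u (hone : (1 : A) ∈ 𝒜 1) (g : G) (f : G → X) :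
    HS.inducedSMul (HS.u g) f = Pi.single g (f g) := by
  rw [← one_mul (HS.u g), ← map_one HS.ι, inducedSMul_ι_mul_u]
  funext k
  simp [gradedProj_of_mem 𝒜 hone, Pi.single_apply, mul_inv_eq_one, eq_comm]

variable (hone : (1 : A) ∈ 𝒜 1)
  (hmul : ∀ (g h : G) (a b : A), a ∈ 𝒜 g → b ∈ 𝒜 h → a * b ∈ 𝒜 (g * h))

/-- `B ⊗_A X`, realised on `G → X`: the function `f` stands for `∑ g, u g ⊗ f g`. -/
@[reducible] noncomputable def inducedModule : Module B (G → X) where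
  smul := HS.inducedSMul
  one_smul f := by
    funext g
    show ∑ h, _ = _
    simp only [coeff_one, gradedProj_of_mem 𝒜 hone, mul_inv_eq_one, eq_comm (a := (1 : G)),
      ite_smul, one_smul, zero_smul, Finset.sum_ite_eq, Finset.mem_univ, if_true]
  mul_smul b b' f := by
    funext g
    have hprod : ∀ h k, gradedProj 𝒜 (g * h⁻¹)
        (HS.coeff b k * gradedProj 𝒜 (k * h⁻¹) (HS.coeff b' h))
        = gradedProj 𝒜 (g * k⁻¹) (HS.coeff b k) * gradedProj 𝒜 (k * h⁻¹) (HS.coeff b' h) := by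
      intro h k
      have := gradedProj_smul_of_mem_right 𝒜 𝒜 hmul (HS.coeff b k)
        (gradedProj_mem 𝒜 (k * h⁻¹) (HS.coeff b' h)) (g * h⁻¹)
      rwa [smul_eq_mul, smul_eq_mul, mul_inv_rev, inv_inv, mul_assoc, inv_mul_cancel_left]
        at this
    show ∑ h, _ = ∑ k, _ • ∑ h, _
    simp only [coeff_mul, map_sum, hprod, Finset.sum_smul, Finset.smul_sum, mul_smul]
    exact Finset.sum_comm
  smul_zero b := by
    funext g
    show HS.inducedSMul b 0 g = 0
    simp [inducedSMul]
  smul_add b f f' := by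
    funext g
    show HS.inducedSMul b (f + f') g = HS.inducedSMul b f g + HS.inducedSMul b f' g
    simp [inducedSMul, smul_add, Finset.sum_add_distrib]
  add_smul b b' f := by
    funext g
    show HS.inducedSMul (b + b') f g = HS.inducedSMul b f g + HS.inducedSMul b' f g
    simp [inducedSMul, add_smul, Finset.sum_add_distrib]
  zero_smul f := by
    funext g
    show HS.inducedSMul 0 f g = 0
    simp [inducedSMul]

noncomputable def induction : ModuleCat.{u} A ⥤ ModuleCat.{u} B where
  obj X := letI := HS.inducedModule hone hmul (X := X); ModuleCat.of B (G → X)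
  map {X Y} φ :=
    letI := HS.inducedModule hone hmul (X := X)
    letI := HS.inducedModule hone hmul (X := Y)
    ModuleCat.ofHom
      { toFun f := φ ∘ f
        map_add' f f' := by funext g; exact map_add φ.hom _ _
        map_smul' b f := by
          funext g
          show φ (HS.inducedSMul b f g) = HS.inducedSMul b (φ ∘ f) g
          simp [inducedSMul] }

noncomputable def inductionLift {X : ModuleCat.{u} A} {Y : ModuleCat.{u} B}
    (ψ : X ⟶ (ModuleCat.restrictScalars HS.ι.toRingHom).obj Y) :
    (HS.induction hone hmul).obj X ⟶ Y :=
  letI := HS.inducedModule hone hmul (X := X)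
  let sumψ : (G → X) →+ Y :=
    { toFun f := ∑ g, HS.u g • (ψ.hom (f g) : Y)
      map_zero' := by
        simp only [Pi.zero_apply, map_zero, smul_zero]
        exact Finset.sum_const_zero
      map_add' f f' := by
        simp only [Pi.add_apply, map_add, smul_add]
        exact Finset.sum_add_distrib }
  ModuleCat.ofHom
    { sumψ with
      map_smul' := HS.map_smul_of_map_ι_mul_u_smul sumψ fun a g f => by
        show ∑ k, HS.u k • (ψ.hom (HS.inducedSMul (HS.ι a * HS.u g) f k) : Y)
          = (HS.ι a * HS.u g) • ∑ k, HS.u k • (ψ.hom (f k) : Y)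
        have hψ : ∀ k, HS.u k • (ψ.hom (gradedProj 𝒜 (k * g⁻¹) a • f g) : Y)
            = (HS.ι (gradedProj 𝒜 (k * g⁻¹) a) * HS.u g) • (ψ.hom (f g) : Y) := fun k => by
          rw [ψ.hom.map_smul]
          show HS.u k • (HS.ι (gradedProj 𝒜 (k * g⁻¹) a) • (ψ.hom (f g) : Y)) = _
          rw [smul_smul, u_mul_ι_gradedProj]
        simp only [mul_u_smul_sum_u_smul, inducedSMul_ι_mul_u, hψ]
        rw [← Finset.sum_smul, ← Finset.sum_mul, ← map_sum, sum_gradedProj_mul_inv] }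

noncomputable def inductionHomEquiv (X : ModuleCat.{u} A) (Y : ModuleCat.{u} B) :
    ((HS.induction hone hmul).obj X ⟶ Y) ≃
      (X ⟶ (ModuleCat.restrictScalars HS.ι.toRingHom).obj Y) :=
  letI := HS.inducedModule hone hmul (X := X)
  { toFun φ := ModuleCat.ofHom (Y := (ModuleCat.restrictScalars HS.ι.toRingHom).obj Y)
      { toFun x := φ (fun _ => x)
        map_add' x x' := map_add φ.hom (fun _ => x) (fun _ => x')
        map_smul' a x := by
          show φ (fun _ => a • x) = HS.ι a • φ (fun _ => x)
          rw [← HS.inducedSMul_ι_const]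
          exact φ.hom.map_smul (HS.ι a) _ }
    invFun := HS.inductionLift hone hmul
    left_inv φ := ModuleCat.hom_ext <| LinearMap.ext fun f => by
      show ∑ g, HS.u g • φ (fun _ => f g) = φ f
      have hφ : ∀ g, HS.u g • φ (fun _ => f g) = φ (Pi.single g (f g)) := fun g => by
        rw [← HS.inducedSMul_u hone g fun _ => f g]
        exact (φ.hom.map_smul (HS.u g) _).symm
      simp only [hφ]
      exact (map_sum φ.hom _ _).symm.trans (congrArg φ.hom (Finset.univ_sum_single f))
    right_inv ψ := ModuleCat.hom_ext <| LinearMap.ext fun x => by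
      show ∑ g, HS.u g • (ψ.hom x : Y) = ψ.hom x
      rw [← Finset.sum_smul, HS.sum_u, one_smul] }

noncomputable def inductionAdjunction :
    HS.induction hone hmul ⊣ ModuleCat.restrictScalars HS.ι.toRingHom :=
  Adjunction.mkOfHomEquiv
    { homEquiv := HS.inductionHomEquiv hone hmul
      homEquiv_naturality_left_symm _ _ := rfl
      homEquiv_naturality_right _ _ := rfl }

noncomputable def inductionHomLinearEquiv (X : ModuleCat.{u} A) (Y : ModuleCat.{u} B) :
    ((HS.induction hone hmul).obj X ⟶ Y) ≃ₗ[K]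
      (X ⟶ (ModuleCat.restrictScalars HS.ι.toRingHom).obj Y) :=
  { HS.inductionHomEquiv hone hmul X Y with
    map_add' _ _ := rfl
    map_smul' k φ := ModuleCat.hom_ext <| LinearMap.ext fun x => by
      show algebraMap K B k • φ (fun _ => x) = HS.ι (algebraMap K A k) • φ (fun _ => x)
      rw [AlgHom.commutes] }

instance : (HS.induction hone hmul).PreservesProjectiveObjects :=
  Functor.preservesProjectiveObjects_of_adjunction_of_preservesEpimorphisms
    (HS.inductionAdjunction hone hmul)

instance : (HS.induction hone hmul).Additive where
  map_add := rfl

instance : (HS.induction hone hmul).PreservesHomology :=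
  Functor.preservesHomology_of_map_exact _ fun S hS => by
    rw [ShortComplex.moduleCat_exact_iff] at hS ⊢
    intro f hf
    choose x hx using fun g => hS (f g) (congrFun hf g)
    exact ⟨x, funext hx⟩

end Induction

section TensorDual

open TensorProduct

variable {V : Type u} [AddCommGroup V] [Module A V] [Module K V]
  (𝒱 : G → Submodule K V) [Decomposition 𝒱]

lemma regrade_inducedSMul_ι_mul_u
    (hV : ∀ (g h : G) (a : A) (v : V), a ∈ 𝒜 g → v ∈ 𝒱 h → a • v ∈ 𝒱 (g * h))
    (a : A) (g : G) (f : G → V) :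
    regrade 𝒱 (HS.inducedSMul (HS.ι a * HS.u g) f) =
      fun h => a • gradedProj 𝒱 (g * h⁻¹) (regrade 𝒱 f h) := by
  funext h
  have hproj : ∀ k, gradedProj 𝒱 (k * h⁻¹) (gradedProj 𝒜 (k * g⁻¹) a • f g) =
      gradedProj 𝒜 (k * g⁻¹) a • gradedProj 𝒱 (g * h⁻¹) (f g) := fun k => by
    rw [gradedProj_smul_of_mem_left 𝒜 𝒱 hV (gradedProj_mem 𝒜 _ a), mul_inv_rev, inv_inv,
      mul_assoc, inv_mul_cancel_left]
  simp only [regrade_apply, inducedSMul_ι_mul_u, hproj, ← Finset.sum_smul,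
    sum_gradedProj_mul_inv, map_sum, gradedProj_gradedProj, mul_left_inj, Finset.sum_ite_eq',
    Finset.mem_univ, if_true]

variable [Module B (V ⊗[K] (G → K))]
  (hVB : ∀ (a : A) (g : G) (v : V) (h : G),
    (HS.ι a * HS.u g) • (v ⊗ₜ[K] (Pi.single h (1 : K) : G → K)) =
      (a • ((DirectSum.decompose 𝒱 v (g * h⁻¹) : 𝒱 (g * h⁻¹)) : V)) ⊗ₜ[K]
        (Pi.single h (1 : K) : G → K))
include hVB

lemma ι_mul_u_smul_piScalarRight_symm (a : A) (g : G) (w : G → V) :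
    (HS.ι a * HS.u g) • (piScalarRight K K V G).symm w =
      (piScalarRight K K V G).symm fun h => a • gradedProj 𝒱 (g * h⁻¹) (w h) := by
  conv_lhs => rw [← Finset.univ_sum_single w]
  conv_rhs => rw [← Finset.univ_sum_single (fun h => a • gradedProj 𝒱 (g * h⁻¹) (w h))]
  simp only [map_sum, Finset.smul_sum, piScalarRight_symm_single, hVB, gradedProj_apply]

lemma ι_smul_piScalarRight_symm (a : A) (w : G → V) :
    HS.ι a • (piScalarRight K K V G).symm w = (piScalarRight K K V G).symm (a • w) := by
  rw [HS.ι_eq_sum_mul_u a, Finset.sum_smul]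
  simp only [ι_mul_u_smul_piScalarRight_symm HS 𝒱 hVB, ← map_sum]
  congr 1
  funext h
  rw [Finset.sum_apply, ← Finset.smul_sum, sum_gradedProj_mul_inv, Pi.smul_apply]

noncomputable def restrictTensorEquiv :
    (ModuleCat.restrictScalars HS.ι.toRingHom).obj (ModuleCat.of B (V ⊗[K] (G → K))) ≃ₗ[A]
      (G → V) :=
  LinearEquiv.symm
    { (piScalarRight K K V G).symm with
      map_smul' a w := (HS.ι_smul_piScalarRight_symm 𝒱 hVB a w).symm }

variable (hone : (1 : A) ∈ 𝒜 1)
  (hmul : ∀ (g h : G) (a b : A), a ∈ 𝒜 g → b ∈ 𝒜 h → a * b ∈ 𝒜 (g * h))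
  (hV : ∀ (g h : G) (a : A) (v : V), a ∈ 𝒜 g → v ∈ 𝒱 h → a • v ∈ 𝒱 (g * h))

/-- On generators, `u g ⊗ v ↦ ∑ h, v_{g h⁻¹} ⊗ p_h`. -/
noncomputable def inducedTensorEquiv :
    letI := HS.inducedModule hone hmul (X := V)
    (G → V) ≃ₗ[B] V ⊗[K] (G → K) :=
  letI := HS.inducedModule hone hmul (X := V)
  let e : (G → V) ≃+ V ⊗[K] (G → K) :=
    (regrade 𝒱).trans (piScalarRight K K V G).symm.toAddEquiv
  { e with
    map_smul' := HS.map_smul_of_map_ι_mul_u_smul e.toAddMonoidHom fun a g f => by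
      show (piScalarRight K K V G).symm (regrade 𝒱 (HS.inducedSMul (HS.ι a * HS.u g) f)) = _
      rw [regrade_inducedSMul_ι_mul_u HS 𝒱 hV, ← ι_mul_u_smul_piScalarRight_symm HS 𝒱 hVB]
      rfl }

end TensorDual

end IsSmashProduct

namespace ModuleCat

universe v

noncomputable def homPiLinearEquiv {K R : Type*} {ι : Type v} [Field K] [Ring R] [Algebra K R]
    {X Z N : ModuleCat.{v} R} (e : Z ≃ₗ[R] (ι → N)) : (X ⟶ Z) ≃ₗ[K] (ι → (X ⟶ N)) where
  toFun φ i := ofHom (LinearMap.proj i ∘ₗ e.toLinearMap ∘ₗ φ.hom)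
  invFun F := ofHom (e.symm.toLinearMap ∘ₗ LinearMap.pi fun i => (F i).hom)
  left_inv φ := by ext x; exact e.symm_apply_apply (φ x)
  right_inv F := by funext i; ext x; simp
  map_add' φ ψ := by funext i; ext x; simp
  map_smul' k φ := by
    funext i; ext x
    show e (algebraMap K R k • φ x) i = algebraMap K R k • e (φ x) i
    rw [map_smul]
    rfl

noncomputable def piFunctor (R : Type*) (ι : Type v) [Ring R] :
    ModuleCat.{v} R ⥤ ModuleCat.{v} R where
  obj X := of R (ι → X)
  map φ := ofHom (φ.hom.compLeft ι)

instance (R : Type*) (ι : Type v) [Ring R] : (piFunctor R ι).Additive where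
  map_add := rfl

instance (R : Type*) (ι : Type v) [Ring R] : (piFunctor R ι).PreservesHomology :=
  Functor.preservesHomology_of_map_exact _ fun S hS => by
    rw [ShortComplex.moduleCat_exact_iff] at hS ⊢
    intro f hf
    choose x hx using fun g => hS (f g) (congrFun hf g)
    exact ⟨x, funext hx⟩

end ModuleCat

open TensorProduct Opposite

theorem stmt16_general (K : Type u) [Field K] (A : Type u) [Ring A] [Algebra K A]
    (G : Type u) [Group G] [Fintype G] [DecidableEq G]
    (𝒜 : G → Submodule K A) [DirectSum.Decomposition 𝒜]
    (hone : (1 : A) ∈ 𝒜 1)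
    (hmul : ∀ (g h : G) (a b : A), a ∈ 𝒜 g → b ∈ 𝒜 h → a * b ∈ 𝒜 (g * h))
    (B : Type u) [Ring B] [Algebra K B]
    (HS : IsSmashProduct K A G 𝒜 B)
    -- M : a graded A-module
    (M : Type u) [AddCommGroup M] [Module A M] [Module K M]
    (ℳ : G → Submodule K M) [DirectSum.Decomposition ℳ]
    (hM : ∀ (g h : G) (a : A) (m : M), a ∈ 𝒜 g → m ∈ ℳ h → a • m ∈ ℳ (g * h))
    -- N : a graded A-module
    (N : Type u) [AddCommGroup N] [Module A N] [Module K N]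
    (𝒩 : G → Submodule K N) [DirectSum.Decomposition 𝒩]
    -- the A # G^*-module structures on M ⊗_K (KG)^* and N ⊗_K (KG)^*
    [Module B (M ⊗[K] (G → K))]
    (hMB : ∀ (a : A) (g : G) (m : M) (h : G),
      (HS.ι a * HS.u g) • (m ⊗ₜ[K] (Pi.single h (1 : K) : G → K)) =
        (a • ((DirectSum.decompose ℳ m (g * h⁻¹) : ℳ (g * h⁻¹)) : M)) ⊗ₜ[K]
          (Pi.single h (1 : K) : G → K))
    [Module B (N ⊗[K] (G → K))]
    (hNB : ∀ (a : A) (g : G) (n : N) (h : G),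
      (HS.ι a * HS.u g) • (n ⊗ₜ[K] (Pi.single h (1 : K) : G → K)) =
        (a • ((DirectSum.decompose 𝒩 n (g * h⁻¹) : 𝒩 (g * h⁻¹)) : N)) ⊗ₜ[K]
          (Pi.single h (1 : K) : G → K))
    (i : ℕ) :
    Nonempty
      (((((_root_.Ext K (ModuleCat.{u} A) i).obj (op (ModuleCat.of A M))).obj
            (ModuleCat.of A N) : Type u) ⊗[K] (G → K)) ≃ₗ[K]
        ((((_root_.Ext K (ModuleCat.{u} B) i).obj
            (op (ModuleCat.of B (M ⊗[K] (G → K))))).obj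
            (ModuleCat.of B (N ⊗[K] (G → K))) : Type u))) := by
  let P := ProjectiveResolution.of (ModuleCat.of A M)
  let Q := (HS.induction hone hmul).mapProjectiveResolution P
  let Y := ModuleCat.of B (N ⊗[K] (G → K))
  let homEquiv (n : ℕ) := (HS.inductionHomLinearEquiv hone hmul (P.complex.X n) Y).trans
    (ModuleCat.homPiLinearEquiv (N := ModuleCat.of A N) (HS.restrictTensorEquiv 𝒩 hNB))
  let homIso : Q.complex.linearYonedaObj K Y ≅
      ((ModuleCat.piFunctor K G).mapHomologicalComplex _).obj
        (P.complex.linearYonedaObj K (ModuleCat.of A N)) :=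
    HomologicalComplex.Hom.isoOfComponents (fun n => (homEquiv n).toModuleIso) fun _ _ _ => rfl
  let inducedIso : (HS.induction hone hmul).obj (ModuleCat.of A M) ≅
      ModuleCat.of B (M ⊗[K] (G → K)) :=
    (HS.inducedTensorEquiv ℳ hMB hone hmul hM).toModuleIso
  exact ⟨piScalarRight K K _ G ≪≫ₗ
    ((ModuleCat.piFunctor K G).mapIso (P.isoExt i (ModuleCat.of A N)) ≪≫
      (((P.complex.linearYonedaObj K _).sc i).mapHomologyIso (ModuleCat.piFunctor K G)).symm ≪≫
      (HomologicalComplex.homologyFunctor _ _ i).mapIso homIso.symm ≪≫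
      (Q.isoExt i Y).symm ≪≫
      ((_root_.Ext K (ModuleCat.{u} B) i).mapIso inducedIso.op).symm.app Y).toLinearEquiv⟩

theorem stmt16 (K : Type u) [Field K] (A : Type u) [Ring A] [Algebra K A]
    (G : Type u) [Group G] [Fintype G] [DecidableEq G]
    (𝒜 : G → Submodule K A) [DirectSum.Decomposition 𝒜]
    (hone : (1 : A) ∈ 𝒜 1)
    (hmul : ∀ (g h : G) (a b : A), a ∈ 𝒜 g → b ∈ 𝒜 h → a * b ∈ 𝒜 (g * h))
    (B : Type u) [Ring B] [Algebra K B]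
    (HS : IsSmashProduct K A G 𝒜 B)
    -- M : a graded A-module
    (M : Type u) [AddCommGroup M] [Module A M] [Module K M]
    (ℳ : G → Submodule K M) [DirectSum.Decomposition ℳ]
    (hM : ∀ (g h : G) (a : A) (m : M), a ∈ 𝒜 g → m ∈ ℳ h → a • m ∈ ℳ (g * h))
    -- M admits a resolution by finitely generated graded projective A-modules
    (hres : ∃ (Pc : ChainComplex (ModuleCat.{u} A) ℕ)
      (π : Pc ⟶ (ChainComplex.single₀ (ModuleCat.{u} A)).obj (ModuleCat.of A M)),
        (∀ n, CategoryTheory.Projective (Pc.X n) ∧ Module.Finite A (Pc.X n) ∧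
          ∃ ℊ : G → AddSubgroup (Pc.X n), Nonempty (DirectSum.Decomposition ℊ) ∧
            ∀ (g h : G) (a : A) (x : Pc.X n), a ∈ 𝒜 g → x ∈ ℊ h → a • x ∈ ℊ (g * h)) ∧
          QuasiIso π)
    -- N : a graded A-module
    (N : Type u) [AddCommGroup N] [Module A N] [Module K N]
    (𝒩 : G → Submodule K N) [DirectSum.Decomposition 𝒩]
    (hN : ∀ (g h : G) (a : A) (n : N), a ∈ 𝒜 g → n ∈ 𝒩 h → a • n ∈ 𝒩 (g * h))
    -- the A # G^*-module structures on M ⊗_K (KG)^* and N ⊗_K (KG)^*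
    [Module B (M ⊗[K] (G → K))]
    (hMB : ∀ (a : A) (g : G) (m : M) (h : G),
      (HS.ι a * HS.u g) • (m ⊗ₜ[K] (Pi.single h (1 : K) : G → K)) =
        (a • ((DirectSum.decompose ℳ m (g * h⁻¹) : ℳ (g * h⁻¹)) : M)) ⊗ₜ[K]
          (Pi.single h (1 : K) : G → K))
    [Module B (N ⊗[K] (G → K))]
    (hNB : ∀ (a : A) (g : G) (n : N) (h : G),
      (HS.ι a * HS.u g) • (n ⊗ₜ[K] (Pi.single h (1 : K) : G → K)) =
        (a • ((DirectSum.decompose 𝒩 n (g * h⁻¹) : 𝒩 (g * h⁻¹)) : N)) ⊗ₜ[K]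
          (Pi.single h (1 : K) : G → K))
    (i : ℕ) :
    Nonempty
      (((((_root_.Ext K (ModuleCat.{u} A) i).obj (op (ModuleCat.of A M))).obj
            (ModuleCat.of A N) : Type u) ⊗[K] (G → K)) ≃ₗ[K]
        ((((_root_.Ext K (ModuleCat.{u} B) i).obj
            (op (ModuleCat.of B (M ⊗[K] (G → K))))).obj
            (ModuleCat.of B (N ⊗[K] (G → K))) : Type u))) :=
  stmt16_general K A G 𝒜 hone hmul B HS M ℳ hM N 𝒩 hMB hNB i
end
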